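/- arXiv:1802.06936 — 4 statements merged into one kernel-verified Lean document; each statement's English description precedes it below -/
import Mathlib

section
/- Let p ∈ ℝ^k satisfy pᵢ ≥ 0, ∑ pᵢ ≤ 1, |pᵢ − pⱼ| ≤ dᵢⱼ for all i,j. Fix a pair (a,b) with p_a ≥ p_b and ε ≤ d_{ab}, and suppose p_a − p_b > d_{ab} − ε. Define Δ = (p_a − p_b) − (d_{ab} − ε) and p'ᵢ = pᵢ − Δ if pᵢ ≥ p_a, p'ᵢ = p_a − Δ if p_a − Δ ≤ pᵢ < p_a, and p'ᵢ = pᵢ otherwise. Then p' satisfies p'ᵢ ≥ 0, ∑ p'ᵢ ≤ 1, |p'_a − p'_b| ≤ d_{ab} − ε, and |p'ᵢ − p'ⱼ| ≤ dᵢⱼ for all other pairs (i,j) ≠ (a,b). -/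
/-- Feasible region of LP(r,c): p ≥ 0, ∑ p ≤ 1, |pᵢ − pⱼ| ≤ cᵢⱼ. -/
def Feasible {k : ℕ} (c : Fin k → Fin k → ℝ) (p : Fin k → ℝ) : Prop :=
  (∀ i, 0 ≤ p i) ∧ (∑ i, p i ≤ 1) ∧ ∀ i j, |p i - p j| ≤ c i j

/-- The LP objective ⟨r,p⟩. -/
def obj {k : ℕ} (r p : Fin k → ℝ) : ℝ := ∑ i, r i * p i

/-- Optimal value of LP(r,c). -/
noncomputable def OPT {k : ℕ} (r : Fin k → ℝ) (c : Fin k → Fin k → ℝ) : ℝ :=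
  sSup {v | ∃ p, Feasible c p ∧ v = obj r p}

/-- The surgery p' of Lemma "close_obj" is feasible for the LP where d_{ab} is
reduced to d_{ab} − ε. -/
theorem stmt_4 {k : ℕ} (d : Fin k → Fin k → ℝ) (hd : ∀ i j, 0 ≤ d i j)
    (p p' : Fin k → ℝ) (a b : Fin k) (ε Δ : ℝ)
    (hfeas : Feasible d p)
    (hab : p b ≤ p a) (hεd : ε ≤ d a b) (hgap : d a b - ε < p a - p b)
    (hΔ : Δ = (p a - p b) - (d a b - ε))
    (hp' : ∀ i, p' i =
      if p a ≤ p i then p i - Δ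
      else if p a - Δ ≤ p i then p a - Δ
      else p i) :
    (∀ i, 0 ≤ p' i) ∧ (∑ i, p' i ≤ 1) ∧ |p' a - p' b| ≤ d a b - ε ∧
      ∀ i j, (i, j) ≠ (a, b) → |p' i - p' j| ≤ d i j := by
  have hΔpos : 0 < Δ := by linarith
  have key : ∀ i j, |p' i - p' j| ≤ |p i - p j| := by
    intro i j
    have h1 := le_abs_self (p i - p j)
    have h2 := neg_abs_le (p i - p j)
    rw [hp' i, hp' j, abs_sub_le_iff]
    constructor <;> split_ifs <;> linarith
  have hle : ∀ i, p' i ≤ p i := by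
    intro i; rw [hp' i]; split_ifs <;> linarith
  refine ⟨?_, ?_, ?_, ?_⟩
  · intro i; rw [hp' i]
    split_ifs <;> linarith [hfeas.1 b, hfeas.1 i]
  · calc ∑ i, p' i ≤ ∑ i, p i := Finset.sum_le_sum fun i _ => hle i
      _ ≤ 1 := hfeas.2.1
  · rw [hp' a, hp' b, if_pos (le_refl (p a)), abs_le]
    split_ifs <;> constructor <;> linarith
  · intro i j _
    exact (key i j).trans (hfeas.2.2 i j)
end

section
/- Single-constraint perturbation lemma: Fix distance bounds d ∈ ℝ^{k×k} with dᵢⱼ ≥ 0, rewards r ∈ ℝ^k with 0 ≤ rᵢ, ε > 0 with ε ≤ d_{ab}, and a pair (a,b). Let d' equal d except d'_{ab} = d_{ab} − ε. Then the optimal value of max{⟨r,p⟩ : pᵢ ≥ 0, ∑pᵢ ≤ 1, |pᵢ−pⱼ| ≤ dᵢⱼ} exceeds the optimal value of the same program with d' by at most ε ∑ᵢ rᵢ. -/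
/-- Single-constraint perturbation: tightening one distance bound by ε decreases
the LP optimum by at most ε ∑ᵢ rᵢ. -/
theorem stmt_6 {k : ℕ} (d d' : Fin k → Fin k → ℝ) (r : Fin k → ℝ) (a b : Fin k) (ε : ℝ)
    (hd : ∀ i j, 0 ≤ d i j) (hr : ∀ i, 0 ≤ r i) (hε : 0 < ε) (hεd : ε ≤ d a b)
    (hd' : ∀ i j, d' i j = if (i, j) = (a, b) then d a b - ε else d i j) :
    OPT r d - OPT r d' ≤ ε * ∑ i, r i := by
  have hbdd : BddAbove {v | ∃ p, Feasible d' p ∧ v = obj r p} := by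
    refine ⟨∑ i, r i, ?_⟩
    rintro v ⟨p, ⟨hp0, hps, _⟩, rfl⟩
    apply Finset.sum_le_sum
    intro i _
    have hp1 : p i ≤ 1 :=
      le_trans (Finset.single_le_sum (fun j _ => hp0 j) (Finset.mem_univ i)) hps
    nlinarith [hr i, hp0 i]
  have hne : {v | ∃ p, Feasible d p ∧ v = obj r p}.Nonempty := by
    refine ⟨obj r 0, 0, ⟨fun i => le_refl 0, by simp, fun i j => by simpa using hd i j⟩, rfl⟩
  have key : ∀ v ∈ {v | ∃ p, Feasible d p ∧ v = obj r p}, v ≤ OPT r d' + ε * ∑ i, r i := by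
    rintro v ⟨p, ⟨hp0, hps, hpd⟩, rfl⟩
    set m := min (p a) (p b) with hm
    set δ := max (|p a - p b| - (d a b - ε)) 0 with hδ
    have hδ0 : 0 ≤ δ := le_max_right _ _
    have hδε : δ ≤ ε := by
      have := hpd a b
      apply max_le <;> linarith
    set q := fun i => max (p i - δ) (min (p i) m) with hq
    have hqp : ∀ i, q i ≤ p i := fun i => max_le (by linarith) (min_le_left _ _)
    have hqlow : ∀ i, p i - δ ≤ q i := fun i => le_max_left _ _
    have hq0 : ∀ i, 0 ≤ q i := by
      intro i
      have : 0 ≤ min (p i) m := le_min (hp0 i) (le_min (hp0 a) (hp0 b))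
      exact le_trans this (le_max_right _ _)
    have hlip : ∀ i j, |q i - q j| ≤ |p i - p j| := by
      intro i j
      have h1 : |q i - q j| ≤ max (|(p i - δ) - (p j - δ)|) (|min (p i) m - min (p j) m|) :=
        abs_max_sub_max_le_max _ _ _ _
      have h2 : |(p i - δ) - (p j - δ)| = |p i - p j| := by ring_nf
      have h3 : |min (p i) m - min (p j) m| ≤ max (|p i - p j|) (|m - m|) :=
        abs_min_sub_min_le_max _ _ _ _
      have h4 : |m - m| = 0 := by simp
      rw [h2] at h1
      rw [h4] at h3
      exact le_trans h1 (max_le (le_refl _) (le_trans h3 (by simp)))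
    have hde : 0 ≤ d a b - ε := by linarith
    have hab : |q a - q b| ≤ d a b - ε := by
      rcases le_total (p a) (p b) with h | h
      · have hm' : m = p a := min_eq_left h
        have habs : |p a - p b| = p b - p a := by
          rw [abs_of_nonpos (by linarith)]; ring
        have hqa : q a = p a := by
          simp only [hq, hm', min_self]
          exact max_eq_right (by linarith)
        have hqb : q b = max (p b - δ) (p a) := by
          simp only [hq, hm', min_eq_right h]
        have h1 : q a ≤ q b := by rw [hqa, hqb]; exact le_max_right _ _
        have h2 : q b ≤ p a + (d a b - ε) := by
          rw [hqb]
          apply max_le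
          · have : p b - p a - (d a b - ε) ≤ δ := by
              rw [hδ, habs]; exact le_max_left _ _
            linarith
          · linarith
        rw [abs_of_nonpos (by linarith [hqa ▸ h1])]
        rw [hqa] at h1 ⊢
        linarith
      · have hm' : m = p b := min_eq_right h
        have habs : |p a - p b| = p a - p b := by
          rw [abs_of_nonneg (by linarith)]
        have hqb : q b = p b := by
          simp only [hq, hm', min_self]
          exact max_eq_right (by linarith)
        have hqa : q a = max (p a - δ) (p b) := by
          simp only [hq, hm', min_eq_right h]
        have h1 : q b ≤ q a := by rw [hqa, hqb]; exact le_max_right _ _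
        have h2 : q a ≤ p b + (d a b - ε) := by
          rw [hqa]
          apply max_le
          · have : p a - p b - (d a b - ε) ≤ δ := by
              rw [hδ, habs]; exact le_max_left _ _
            linarith
          · linarith
        rw [abs_of_nonneg (by rw [hqb] at h1 ⊢; linarith)]
        rw [hqb] at h1 ⊢
        linarith
    have hfeas : Feasible d' q := by
      refine ⟨hq0, le_trans (Finset.sum_le_sum fun i _ => hqp i) hps, ?_⟩
      intro i j
      rw [hd' i j]
      split_ifs with hij
      · have hia : i = a := (Prod.mk.injEq _ _ _ _ ▸ hij).1
        have hjb : j = b := (Prod.mk.injEq _ _ _ _ ▸ hij).2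
        subst hia; subst hjb
        exact hab
      · exact le_trans (hlip i j) (hpd i j)
    have hobj : obj r p ≤ obj r q + ε * ∑ i, r i := by
      have h1 : obj r p - obj r q = ∑ i, r i * (p i - q i) := by
        rw [obj, obj, ← Finset.sum_sub_distrib]
        exact Finset.sum_congr rfl fun i _ => (mul_sub _ _ _).symm
      have h2 : ∑ i, r i * (p i - q i) ≤ ∑ i, r i * ε := by
        apply Finset.sum_le_sum
        intro i _
        exact mul_le_mul_of_nonneg_left (by have := hqlow i; linarith) (hr i)
      have h3 : ∑ i, r i * ε = ε * ∑ i, r i := by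
        rw [← Finset.sum_mul, mul_comm]
      linarith
    have hopt : obj r q ≤ OPT r d' := le_csSup hbdd ⟨q, hfeas, rfl⟩
    linarith
  have : OPT r d ≤ OPT r d' + ε * ∑ i, r i := csSup_le hne key
  linarith
end

section
/- Telescoping perturbation bound: let d, d' ∈ ℝ^{k×k} be nonnegative distance bound vectors with |dᵢⱼ − d'ᵢⱼ| ≤ ε and d'ᵢⱼ ≤ dᵢⱼ for all pairs, and let r ∈ ℝ^k with 0 ≤ rᵢ ≤ 1. Then OPT(r, d) − OPT(r, d') ≤ ε k³, where OPT(r,c) is the optimal value of LP(r,c). -/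
namespace SimpleGraph

variable {V : Type*} {G : SimpleGraph V}

namespace Walk

def weight (w : V → V → ℝ) {u v : V} (W : G.Walk u v) : ℝ :=
  (W.darts.map fun e => w e.fst e.snd).sum

variable {w : V → V → ℝ}

@[simp] lemma weight_nil {u : V} : (nil : G.Walk u u).weight w = 0 := rfl

@[simp] lemma weight_cons {u v x : V} (h : G.Adj u v) (W : G.Walk v x) :
    (cons h W).weight w = w u v + W.weight w := rfl

lemma weight_concat {u v x : V} (W : G.Walk u v) (h : G.Adj v x) :
    (W.concat h).weight w = W.weight w + w v x := by
  simp [weight, darts_concat]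

lemma weight_nonneg (hw : ∀ a b, 0 ≤ w a b) {u v : V} (W : G.Walk u v) : 0 ≤ W.weight w :=
  List.sum_nonneg (by simp [hw])

lemma weight_bypass_le [DecidableEq V] (hw : ∀ a b, 0 ≤ w a b) {u v : V} (W : G.Walk u v) :
    W.bypass.weight w ≤ W.weight w := by
  obtain ⟨l, hperm, hsub⟩ := List.subperm_of_subset
    (darts_nodup_of_support_nodup W.bypass_isPath.support_nodup) W.darts_bypass_subset_darts
  rw [weight, ← (hperm.map _).sum_eq]
  exact (hsub.map _).sum_le_sum (by simp [hw])

lemma sub_le_weight_add_length_mul {p : V → ℝ} {ε : ℝ}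
    (hp : ∀ a b, G.Adj a b → p b - p a ≤ w a b + ε) {u v : V} (W : G.Walk u v) :
    p v - p u ≤ W.weight w + W.length * ε := by
  induction W with
  | nil => simp
  | cons h W ih =>
    have := hp _ _ h
    simp only [weight_cons, length_cons]
    push_cast
    linarith

lemma sub_le_weight_add_card_mul [Fintype V] [DecidableEq V] (hw : ∀ a b, 0 ≤ w a b)
    {p : V → ℝ} {ε : ℝ} (hε : 0 ≤ ε) (hp : ∀ a b, G.Adj a b → p b - p a ≤ w a b + ε)
    {u v : V} (W : G.Walk u v) :
    p v - p u ≤ W.weight w + Fintype.card V * ε := by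
  have hlen : (W.bypass.length : ℝ) ≤ Fintype.card V := by
    exact_mod_cast W.bypass_isPath.length_lt.le
  calc p v - p u ≤ W.bypass.weight w + W.bypass.length * ε := sub_le_weight_add_length_mul hp _
    _ ≤ W.weight w + Fintype.card V * ε := by
      gcongr
      exact weight_bypass_le hw W

end Walk

noncomputable def walkPotential (G : SimpleGraph V) (w : V → V → ℝ) (p : V → ℝ) (v : V) : ℝ :=
  ⨅ x : Σ u, G.Walk u v, p x.1 + x.2.weight w

variable {w : V → V → ℝ} {p : V → ℝ}

lemma walkPotential_le (hw : ∀ a b, 0 ≤ w a b) (hp : ∀ a, 0 ≤ p a) {u v : V} (W : G.Walk u v) :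
    G.walkPotential w p v ≤ p u + W.weight w := by
  refine ciInf_le ⟨0, ?_⟩ (⟨u, W⟩ : Σ u, G.Walk u v)
  rintro _ ⟨x, rfl⟩
  exact add_nonneg (hp _) (x.2.weight_nonneg hw)

lemma le_walkPotential {v : V} {c : ℝ} (h : ∀ u (W : G.Walk u v), c ≤ p u + W.weight w) :
    c ≤ G.walkPotential w p v :=
  have : Nonempty (Σ u, G.Walk u v) := ⟨⟨v, .nil⟩⟩
  le_ciInf fun x => h x.1 x.2

lemma walkPotential_nonneg (hw : ∀ a b, 0 ≤ w a b) (hp : ∀ a, 0 ≤ p a) (v : V) :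
    0 ≤ G.walkPotential w p v :=
  le_walkPotential fun _ W => add_nonneg (hp _) (W.weight_nonneg hw)

lemma walkPotential_le_self (hw : ∀ a b, 0 ≤ w a b) (hp : ∀ a, 0 ≤ p a) (v : V) :
    G.walkPotential w p v ≤ p v := by
  simpa using walkPotential_le hw hp (.nil : G.Walk v v)

lemma walkPotential_le_add (hw : ∀ a b, 0 ≤ w a b) (hp : ∀ a, 0 ≤ p a) {a b : V}
    (h : G.Adj a b) : G.walkPotential w p b ≤ G.walkPotential w p a + w a b := by
  refine sub_le_iff_le_add.1 (le_walkPotential fun u W => ?_)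
  have := walkPotential_le hw hp (W.concat h)
  rw [Walk.weight_concat] at this
  linarith

lemma sub_card_mul_le_walkPotential [Fintype V] [DecidableEq V] (hw : ∀ a b, 0 ≤ w a b)
    {ε : ℝ} (hε : 0 ≤ ε) (hp : ∀ a b, G.Adj a b → p b - p a ≤ w a b + ε) (v : V) :
    p v - Fintype.card V * ε ≤ G.walkPotential w p v :=
  le_walkPotential fun _ W => by linarith [W.sub_le_weight_add_card_mul hw hε hp]

end SimpleGraph

section LP

variable {k : ℕ} {c c' : Fin k → Fin k → ℝ} {r p q : Fin k → ℝ}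

lemma feasible_zero (hc : ∀ i j, 0 ≤ c i j) : Feasible c 0 :=
  ⟨fun _ => le_rfl, by simp, fun i j => by simpa using hc i j⟩

lemma obj_le_sum (hr : ∀ i, r i ≤ 1) (hp : ∀ i, 0 ≤ p i) : obj r p ≤ ∑ i, p i :=
  Finset.sum_le_sum fun i _ => mul_le_of_le_one_left (hp i) (hr i)

lemma obj_le_obj_add {δ : ℝ} (hr : ∀ i, r i ≤ 1) (hpq : ∀ i, q i ≤ p i ∧ p i - δ ≤ q i) :
    obj r p ≤ obj r q + k * δ := by
  have hterm : ∀ i, r i * p i - r i * q i ≤ δ := fun i => by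
    obtain ⟨h₁, h₂⟩ := hpq i
    nlinarith [mul_le_of_le_one_left (sub_nonneg.2 h₁) (hr i)]
  have := Finset.sum_le_sum fun i (_ : i ∈ Finset.univ) => hterm i
  simp only [Finset.sum_sub_distrib, Finset.sum_const, Finset.card_univ, Fintype.card_fin,
    nsmul_eq_mul] at this
  rw [obj, obj]
  linarith

lemma OPT_le_OPT_add {δ : ℝ} (hc : ∀ i j, 0 ≤ c i j) (hr : ∀ i, r i ≤ 1)
    (h : ∀ p, Feasible c p → ∃ q, Feasible c' q ∧ obj r p ≤ obj r q + δ) :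
    OPT r c ≤ OPT r c' + δ := by
  have hbdd : BddAbove {v | ∃ q, Feasible c' q ∧ v = obj r q} := by
    refine ⟨1, ?_⟩
    rintro _ ⟨q, hq, rfl⟩
    exact (obj_le_sum hr hq.1).trans hq.2.1
  refine csSup_le ⟨_, 0, feasible_zero hc, rfl⟩ ?_
  rintro _ ⟨p, hp, rfl⟩
  obtain ⟨q, hq, hpq⟩ := h p hp
  exact hpq.trans (add_le_add_left (le_csSup hbdd ⟨q, hq, rfl⟩) δ)

lemma Feasible.exists_feasible_sub_le {ε : ℝ} (hp : Feasible c p) (hc' : ∀ i j, 0 ≤ c' i j)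
    (hε : 0 ≤ ε) (hcc' : ∀ i j, c i j ≤ c' i j + ε) :
    ∃ q, Feasible c' q ∧ ∀ i, q i ≤ p i ∧ p i - k * ε ≤ q i := by
  obtain ⟨hp₀, hp₁, hpc⟩ := hp
  set w : Fin k → Fin k → ℝ := fun a b => min (c' a b) (c' b a)
  have hw : ∀ a b, 0 ≤ w a b := fun a b => le_min (hc' a b) (hc' b a)
  have hstep : ∀ a b, (⊤ : SimpleGraph (Fin k)).Adj a b → p b - p a ≤ w a b + ε := fun a b _ =>
    sub_le_iff_le_add.1 <| le_min
      (by linarith [(abs_sub_le_iff.1 (hpc a b)).2, hcc' a b])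
      (by linarith [(abs_sub_le_iff.1 (hpc b a)).1, hcc' b a])
  set q := (⊤ : SimpleGraph (Fin k)).walkPotential w p
  have hqp : ∀ i, q i ≤ p i := SimpleGraph.walkPotential_le_self hw hp₀
  have hlip : ∀ a b, q b ≤ q a + w a b := by
    intro a b
    rcases eq_or_ne a b with rfl | hab
    · linarith [hw a a]
    · exact SimpleGraph.walkPotential_le_add hw hp₀ (G := ⊤) hab
  refine ⟨q, ⟨SimpleGraph.walkPotential_nonneg hw hp₀, ?_, fun i j => ?_⟩, fun i => ⟨hqp i, ?_⟩⟩
  · exact (Finset.sum_le_sum fun i _ => hqp i).trans hp₁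
  · exact abs_sub_le_iff.2 ⟨by linarith [hlip j i, min_le_right (c' j i) (c' i j)],
      by linarith [hlip i j, min_le_left (c' i j) (c' j i)]⟩
  · simpa using SimpleGraph.sub_card_mul_le_walkPotential hw hε hstep i

end LP

theorem stmt_8_general {k : ℕ} (d d' : Fin k → Fin k → ℝ) (r : Fin k → ℝ) (ε : ℝ)
    (hd : ∀ i j, 0 ≤ d i j) (hd' : ∀ i j, 0 ≤ d' i j)
    (hclose : ∀ i j, |d i j - d' i j| ≤ ε)
    (hr : ∀ i, 0 ≤ r i ∧ r i ≤ 1) :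
    OPT r d - OPT r d' ≤ ε * k ^ 3 := by
  rw [sub_le_iff_le_add']
  refine OPT_le_OPT_add hd (fun i => (hr i).2) fun p hp => ?_
  rcases k.eq_zero_or_pos with rfl | hk
  · exact ⟨p, ⟨hp.1, hp.2.1, fun i => i.elim0⟩, by simp⟩
  have hε : 0 ≤ ε := (abs_nonneg _).trans (hclose ⟨0, hk⟩ ⟨0, hk⟩)
  obtain ⟨q, hq, hpq⟩ := hp.exists_feasible_sub_le hd' hε fun i j => by
    linarith [(abs_le.1 (hclose i j)).2]
  refine ⟨q, hq, (obj_le_obj_add (fun i => (hr i).2) hpq).trans ?_⟩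
  have hk3 : (k : ℝ) ^ 2 ≤ k ^ 3 := pow_le_pow_right₀ (by exact_mod_cast hk) (by norm_num)
  nlinarith

/-- Telescoping perturbation bound: OPT(r,d) − OPT(r,d') ≤ ε k³. -/
theorem stmt_8 {k : ℕ} (d d' : Fin k → Fin k → ℝ) (r : Fin k → ℝ) (ε : ℝ)
    (hd : ∀ i j, 0 ≤ d i j) (hd' : ∀ i j, 0 ≤ d' i j)
    (hclose : ∀ i j, |d i j - d' i j| ≤ ε) (hle : ∀ i j, d' i j ≤ d i j)
    (hr : ∀ i, 0 ≤ r i ∧ r i ≤ 1) :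
    OPT r d - OPT r d' ≤ ε * k ^ 3 :=
  stmt_8_general d d' r ε hd hd' hclose hr
end

section
/- Per-round regret decomposition: assume r̄ᵢ ∈ [r̂ᵢ − 2wᵢ, r̂ᵢ] with 0 ≤ r̄ᵢ, wᵢ and let p̄ be an optimal solution of LP(r̂, d̄) and p̂ an optimal solution of LP(r̂, d̂), where OPT(r̂, d̄) − OPT(r̂, d̂) ≤ ε k³. Then the per-round pseudo-regret satisfies ⟨r̄, π(r̄,d̄)⟩ − ⟨r̄, p̂⟩ ≤ ⟨2w, p̂⟩ + εk³, where π(r̄,d̄) is an optimizer of LP(r̄,d̄). -/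
/-- Per-round regret decomposition: the pseudo-regret against the best fair policy is
bounded by the expected confidence widths plus εk³. -/
theorem stmt_15 {k : ℕ} (dbar dhat : Fin k → Fin k → ℝ) (rbar rhat w : Fin k → ℝ)
    (pbar phat pi : Fin k → ℝ) (ε : ℝ)
    (hdbar : ∀ i j, 0 ≤ dbar i j) (hdhat : ∀ i j, 0 ≤ dhat i j)
    (hw : ∀ i, 0 ≤ w i) (hrbar : ∀ i, 0 ≤ rbar i)
    (hsand : ∀ i, rhat i - 2 * w i ≤ rbar i ∧ rbar i ≤ rhat i)
    (hpbar : Feasible dbar pbar ∧ ∀ q, Feasible dbar q → obj rhat q ≤ obj rhat pbar)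
    (hphat : Feasible dhat phat ∧ ∀ q, Feasible dhat q → obj rhat q ≤ obj rhat phat)
    (hpi : Feasible dbar pi ∧ ∀ q, Feasible dbar q → obj rbar q ≤ obj rbar pi)
    (hgap : obj rhat pbar - obj rhat phat ≤ ε * k ^ 3) :
    obj rbar pi - obj rbar phat ≤ (∑ i, 2 * w i * phat i) + ε * k ^ 3 := by
  have h1 : obj rbar pi ≤ obj rhat pi := by
    apply Finset.sum_le_sum
    intro i _
    exact mul_le_mul_of_nonneg_right (hsand i).2 (hpi.1.1 i)
  have h2 : obj rhat pi ≤ obj rhat pbar := hpbar.2 pi hpi.1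
  have h3 : obj rhat phat - obj rbar phat ≤ ∑ i, 2 * w i * phat i := by
    have : obj rhat phat - obj rbar phat = ∑ i, (rhat i - rbar i) * phat i := by
      simp [obj, ← Finset.sum_sub_distrib, sub_mul]
    rw [this]
    apply Finset.sum_le_sum
    intro i _
    exact mul_le_mul_of_nonneg_right (by linarith [(hsand i).1]) (hphat.1.1 i)
  linarith
end
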